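/- For all n ≥ 1, 0 < n!·(e-1) - a(n) < 1, where a(n) = ∑_{k=1}^{n} n!/k!. -/

import Mathlib

def a (n : ℕ) : ℕ := ∑ k ∈ Finset.Icc 1 n, (Nat.factorial n) / (Nat.factorial k)

/-!
Writing `s n = ∑_{k ≤ n} 1/k!`, the integer `n! + a n` equals `n! * s n`, so
`n!(e - 1) - a n = n!(e - s n)`. The tail `e - s n` is positive and at most
`(n + 2) / ((n + 1)! (n + 1))`, so `n!(e - s n) ≤ (n + 2) / (n + 1)²`, which is `< 1` once `n ≥ 1`.
-/

open Finset Nat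

theorem Real.sum_range_pow_div_factorial_lt_exp {x : ℝ} (hx : 0 < x) (n : ℕ) :
    ∑ i ∈ range n, x ^ i / i ! < Real.exp x := by
  calc ∑ i ∈ range n, x ^ i / i ! < ∑ i ∈ range (n + 1), x ^ i / i ! := by
        rw [sum_range_succ]
        exact lt_add_of_pos_right _ (by positivity)
    _ ≤ Real.exp x := Real.sum_le_exp_of_nonneg hx.le _

theorem Real.exp_one_le_sum_inv_factorial_add (n : ℕ) :
    Real.exp 1 ≤ ∑ i ∈ range (n + 1), 1 / (i ! : ℝ) + (n + 2) / ((n + 1)! * (n + 1)) := by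
  have h := Real.exp_bound' zero_le_one le_rfl n.succ_pos
  push_cast at h
  simpa only [one_pow, one_mul, add_assoc, one_add_one_eq_two] using h

theorem factorial_add_a (n : ℕ) :
    (n ! + a n : ℝ) = n ! * ∑ k ∈ range (n + 1), 1 / (k ! : ℝ) := by
  rw [Nat.range_succ_eq_Icc_zero, ← insert_Icc_add_one_left_eq_Icc n.zero_le,
    sum_insert (by simp), zero_add, mul_add, a, Nat.cast_sum, mul_sum]
  congr 1
  · simp
  · refine sum_congr rfl fun k hk => ?_
    rw [Nat.cast_div_charZero (factorial_dvd_factorial (mem_Icc.mp hk).2), mul_one_div]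

theorem factorial_mul_div_factorial_succ_lt_one {n : ℕ} (hn : 1 ≤ n) :
    (n ! : ℝ) * ((n + 2) / ((n + 1)! * (n + 1))) < 1 := by
  have hfac : ((n + 1)! : ℝ) = (n + 1) * n ! := by exact_mod_cast factorial_succ n
  have hn' : (1 : ℝ) ≤ n := by exact_mod_cast hn
  rw [hfac, mul_div_assoc', div_lt_one (by positivity)]
  have : (0 : ℝ) < n ! := by positivity
  nlinarith

theorem floor_bounds : ∀ n : ℕ, 1 ≤ n →
    0 < ((Nat.factorial n) : ℝ) * (Real.exp 1 - 1) - a n ∧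
    ((Nat.factorial n) : ℝ) * (Real.exp 1 - 1) - a n < 1 := by
  intro n hn
  set s := ∑ k ∈ range (n + 1), 1 / (k ! : ℝ)
  have hdiff : (n ! : ℝ) * (Real.exp 1 - 1) - a n = n ! * (Real.exp 1 - s) := by
    linear_combination -factorial_add_a n
  have hlow : s < Real.exp 1 := by
    simpa only [one_pow] using Real.sum_range_pow_div_factorial_lt_exp one_pos (n + 1)
  rw [hdiff]
  refine ⟨mul_pos (by positivity) (sub_pos.mpr hlow), ?_⟩
  calc (n ! : ℝ) * (Real.exp 1 - s) ≤ n ! * ((n + 2) / ((n + 1)! * (n + 1))) := by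
        gcongr
        linarith [Real.exp_one_le_sum_inv_factorial_add n]
    _ < 1 := factorial_mul_div_factorial_succ_lt_one hn
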